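/- The function u(x) = ½((‖x‖ − 1)⁺)² on ℝ² is convex, continuously differentiable, and on the open set {‖x‖ > 1} it is twice differentiable with det(D²u(x)) = 1 − 1/‖x‖, while on the open ball {‖x‖ < 1} it is identically zero with det(D²u) = 0. -/

import Mathlib

open Matrix

/-- The Hessian matrix of `u : ℝ^d → ℝ` at `x`, in the standard basis. -/
noncomputable def hessianMatrix {d : ℕ} (u : EuclideanSpace ℝ (Fin d) → ℝ)
    (x : EuclideanSpace ℝ (Fin d)) : Matrix (Fin d) (Fin d) ℝ :=
  Matrix.of fun i j =>
    iteratedFDeriv ℝ 2 u x ![EuclideanSpace.single i 1, EuclideanSpace.single j 1]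

/-!
Write `r = ‖x‖`. Since `(r - 1)⁺` is convex and nonnegative, its square is convex. The profile
`t ↦ (t⁺)²` is `C¹` and the norm is smooth away from the origin, so `u` is `C¹`. Outside the unit
ball `u = ½ (r - 1)²`, with gradient `(1 - 1/r) x` and Hessian `(1 - 1/r) I + x xᵀ / r³`; in the
plane its determinant is `(1 - 1/r) (1 - 1/r + r² / r³) = 1 - 1/r`.
-/

open Filter Topology Set

theorem hasDerivAt_max_zero_sq (t : ℝ) :
    HasDerivAt (fun s : ℝ => max s 0 ^ 2) (2 * max t 0) t := by
  have off_zero : ∀ t ≠ 0, HasDerivAt (fun s : ℝ => max s 0 ^ 2) (2 * max t 0) t := by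
    intro t ht
    rcases ht.lt_or_gt with ht | ht
    · have hzero : (fun s : ℝ => max s 0 ^ 2) =ᶠ[𝓝 t] fun _ => 0 := by
        filter_upwards [Iio_mem_nhds ht] with s (hs : s < 0)
        simp [max_eq_right (le_of_lt hs)]
      simpa [max_eq_right ht.le] using (hasDerivAt_const t (0 : ℝ)).congr_of_eventuallyEq hzero
    · have hsq : (fun s : ℝ => max s 0 ^ 2) =ᶠ[𝓝 t] fun s => s ^ 2 := by
        filter_upwards [Ioi_mem_nhds ht] with s (hs : 0 < s)
        rw [max_eq_left (le_of_lt hs)]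
      simpa [max_eq_left ht.le] using (hasDerivAt_pow 2 t).congr_of_eventuallyEq hsq
  exact hasDerivAt_of_hasDerivAt_of_ne' off_zero (by fun_prop) (by fun_prop) t

theorem contDiff_max_zero_sq : ContDiff ℝ 1 fun s : ℝ => max s 0 ^ 2 := by
  rw [contDiff_one_iff_deriv]
  refine ⟨fun t => (hasDerivAt_max_zero_sq t).differentiableAt, ?_⟩
  rw [funext fun t => (hasDerivAt_max_zero_sq t).deriv]
  fun_prop

section NormedSpace

variable {E : Type*} [NormedAddCommGroup E]

/-- `max (‖x‖ - 1) 0` is the distance from `x` to the closed unit ball. -/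
noncomputable def halfSqDistUnitBall (x : E) : ℝ := 1 / 2 * max (‖x‖ - 1) 0 ^ 2

theorem convexOn_halfSqDistUnitBall [NormedSpace ℝ E] :
    ConvexOn ℝ univ (halfSqDistUnitBall (E := E)) := by
  have hdist : ConvexOn ℝ univ fun x : E => max (‖x‖ - 1) 0 :=
    ((convexOn_norm convex_univ).add_const (-1)).sup (convexOn_const 0 convex_univ)
  exact (hdist.pow (fun x _ => le_max_right _ _) 2).smul (by norm_num : (0 : ℝ) ≤ 1 / 2)

theorem halfSqDistUnitBall_eventuallyEq_zero {x : E} (hx : ‖x‖ < 1) :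
    halfSqDistUnitBall =ᶠ[𝓝 x] 0 := by
  filter_upwards [(isOpen_lt continuous_norm continuous_const).mem_nhds hx] with y hy
  simp [halfSqDistUnitBall, max_eq_right (sub_nonpos.2 (le_of_lt hy))]

theorem halfSqDistUnitBall_eventuallyEq {x : E} (hx : 1 < ‖x‖) :
    halfSqDistUnitBall =ᶠ[𝓝 x] fun y => 1 / 2 * (‖y‖ - 1) ^ 2 := by
  filter_upwards [(isOpen_lt continuous_const continuous_norm).mem_nhds hx] with y hy
  simp [halfSqDistUnitBall, max_eq_left (sub_nonneg.2 (le_of_lt hy))]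

end NormedSpace

section InnerProductSpace

variable {E : Type*} [NormedAddCommGroup E] [InnerProductSpace ℝ E] {x : E}

theorem contDiff_halfSqDistUnitBall : ContDiff ℝ 1 (halfSqDistUnitBall (E := E)) := by
  refine contDiff_iff_contDiffAt.2 fun x => ?_
  rcases lt_or_ge ‖x‖ 1 with hx | hx
  · exact contDiffAt_const.congr_of_eventuallyEq (halfSqDistUnitBall_eventuallyEq_zero hx)
  · have hx0 : x ≠ 0 := by rintro rfl; norm_num at hx
    exact (contDiff_max_zero_sq.contDiffAt.comp x
      ((contDiffAt_norm ℝ hx0).sub contDiffAt_const)).const_smul (1 / 2 : ℝ)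

theorem contDiffAt_half_sq_norm_sub_one {n : WithTop ℕ∞} (hx : x ≠ 0) :
    ContDiffAt ℝ n (fun y : E => 1 / 2 * (‖y‖ - 1) ^ 2) x :=
  contDiffAt_const.mul (((contDiffAt_norm ℝ hx).sub contDiffAt_const).pow 2)

theorem hasFDerivAt_norm (hx : x ≠ 0) : HasFDerivAt (‖·‖) (‖x‖⁻¹ • innerSL ℝ x) x := by
  have h := (hasStrictFDerivAt_norm_sq x).hasFDerivAt.sqrt (by simpa using hx)
  simp only [Real.sqrt_sq (norm_nonneg _)] at h
  refine h.congr_fderiv ?_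
  ext v
  simp only [one_div, _root_.mul_inv_rev, _root_.smul_apply, coe_innerSL_apply,
    nsmul_eq_mul, Nat.cast_ofNat, smul_eq_mul]
  field_simp

theorem hasFDerivAt_half_sq_norm_sub_one (hx : x ≠ 0) :
    HasFDerivAt (fun y : E => 1 / 2 * (‖y‖ - 1) ^ 2) ((1 - ‖x‖⁻¹) • innerSL ℝ x) x := by
  refine ((((hasFDerivAt_norm hx).sub_const 1).pow 2).const_mul (1 / 2 : ℝ)).congr_fderiv ?_
  ext v
  simp only [one_div, Nat.add_one_sub_one, pow_one, nsmul_eq_mul, Nat.cast_ofNat,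
    _root_.smul_apply, coe_innerSL_apply, smul_eq_mul]
  field_simp

theorem hasFDerivAt_one_sub_inv_norm (hx : x ≠ 0) :
    HasFDerivAt (fun y : E => 1 - ‖y‖⁻¹) ((‖x‖ ^ 3)⁻¹ • innerSL ℝ x) x := by
  refine (((hasDerivAt_inv (norm_ne_zero_iff.2 hx)).comp_hasFDerivAt x
    (hasFDerivAt_norm hx)).const_sub 1).congr_fderiv ?_
  ext v
  simp only [neg_smul, neg_neg, _root_.smul_apply, coe_innerSL_apply, smul_eq_mul]
  field_simp

theorem iteratedFDeriv_two_half_sq_norm_sub_one (hx : x ≠ 0) (v w : E) :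
    iteratedFDeriv ℝ 2 (fun y : E => 1 / 2 * (‖y‖ - 1) ^ 2) x ![v, w]
      = (1 - ‖x‖⁻¹) * inner ℝ v w + (‖x‖ ^ 3)⁻¹ * inner ℝ x v * inner ℝ x w := by
  have hgrad : fderiv ℝ (fun y : E => 1 / 2 * (‖y‖ - 1) ^ 2)
      =ᶠ[𝓝 x] (fun y : E => 1 - ‖y‖⁻¹) • fun y => innerSL ℝ y := by
    filter_upwards [isOpen_ne.mem_nhds hx] with y hy
    exact (hasFDerivAt_half_sq_norm_sub_one hy).fderiv
  -- Over `ℝ` the conjugate-linear `innerSL ℝ` is definitionally linear; the ascription below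
  -- lets it be differentiated as a continuous linear map, and the final `rfl` undoes it.
  rw [iteratedFDeriv_two_apply, hgrad.fderiv_eq,
    ((hasFDerivAt_one_sub_inv_norm hx).smul (innerSL ℝ : E →L[ℝ] E →L[ℝ] ℝ).hasFDerivAt).fderiv]
  simp only [Fin.isValue, cons_val_zero, _root_.add_apply,
    _root_.smul_apply, ContinuousLinearMap.smulRight_apply, coe_innerSL_apply,
    smul_eq_mul, cons_val_one, cons_val_fin_one, mul_assoc]
  rfl

end InnerProductSpace

section Hessian

variable {d : ℕ} {u v : EuclideanSpace ℝ (Fin d) → ℝ} {x : EuclideanSpace ℝ (Fin d)}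

theorem hessianMatrix_congr (h : u =ᶠ[𝓝 x] v) : hessianMatrix u x = hessianMatrix v x := by
  ext i j
  simp only [hessianMatrix, of_apply, (h.iteratedFDeriv ℝ 2).eq_of_nhds]

theorem hessianMatrix_zero : hessianMatrix (0 : EuclideanSpace ℝ (Fin d) → ℝ) x = 0 := by
  ext i j
  simp [hessianMatrix]

theorem hessianMatrix_eq_smul_one_add_smul_vecMulVec {a b : ℝ}
    (h : ∀ v w, iteratedFDeriv ℝ 2 u x ![v, w] = a * inner ℝ v w + b * inner ℝ x v * inner ℝ x w) :
    hessianMatrix u x = a • 1 + b • vecMulVec x x := by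
  ext i j
  simp [hessianMatrix, h, vecMulVec_apply, one_apply, EuclideanSpace.inner_single_right, eq_comm,
    mul_assoc]

end Hessian

theorem det_fin_two_smul_one_add_smul_vecMulVec (x : EuclideanSpace ℝ (Fin 2)) (a b : ℝ) :
    (a • 1 + b • vecMulVec x x).det = a * (a + b * ‖x‖ ^ 2) := by
  rw [det_fin_two, EuclideanSpace.norm_sq_eq, Fin.sum_univ_two]
  simp only [Matrix.add_apply, Matrix.smul_apply, one_apply_eq, one_apply_ne zero_ne_one,
    one_apply_ne one_ne_zero, vecMulVec_apply, smul_eq_mul, Real.norm_eq_abs, sq_abs]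
  ring

/-- The function `u(x) = ½((‖x‖−1)⁺)²` on `ℝ²` is convex and `C¹`; on `{‖x‖ > 1}` it is
twice differentiable with `det D²u = 1 − 1/‖x‖`, and on `{‖x‖ < 1}` it vanishes with
`det D²u = 0`. -/
theorem stmt_13 (u : EuclideanSpace ℝ (Fin 2) → ℝ)
    (hu : u = fun x => (1 / 2) * (max (‖x‖ - 1) 0) ^ 2) :
    ConvexOn ℝ Set.univ u ∧ ContDiff ℝ 1 u ∧
    (∀ x, 1 < ‖x‖ →
      ContDiffAt ℝ 2 u x ∧ (hessianMatrix u x).det = 1 - 1 / ‖x‖) ∧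
    (∀ x, ‖x‖ < 1 → u x = 0 ∧ (hessianMatrix u x).det = 0) := by
  obtain rfl : u = halfSqDistUnitBall := hu
  refine ⟨convexOn_halfSqDistUnitBall, contDiff_halfSqDistUnitBall, fun x hx => ?_,
    fun x hx => ?_⟩
  · have hx0 : x ≠ 0 := by rintro rfl; norm_num at hx
    have houter := halfSqDistUnitBall_eventuallyEq hx
    refine ⟨(contDiffAt_half_sq_norm_sub_one hx0).congr_of_eventuallyEq houter, ?_⟩
    rw [hessianMatrix_congr houter, hessianMatrix_eq_smul_one_add_smul_vecMulVec
      (iteratedFDeriv_two_half_sq_norm_sub_one hx0), det_fin_two_smul_one_add_smul_vecMulVec]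
    field_simp
    ring
  · have hinner := halfSqDistUnitBall_eventuallyEq_zero hx
    exact ⟨hinner.eq_of_nhds, by rw [hessianMatrix_congr hinner, hessianMatrix_zero, det_zero]⟩
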